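/- Define an Engel sink of an element g of a group G to be a set E ⊆ G such that for every x ∈ G there exists n(x) with [x, ₙg] ∈ E for all n ≥ n(x), where [x, ₙg] denotes the left-normed commutator [x,g,g,...,g] with g repeated n times. If g has a finite Engel sink, then g has a unique smallest Engel sink E(g), and for every s ∈ E(g) there exists k ≥ 1 with s = [s, ₖg]. -/
import Mathlib


/-- The left-normed iterated commutator `[x, ₙg]`: `engel g x 0 = x` and
`engel g x (n+1) = [engel g x n, g] = (engel g x n)⁻¹ * g⁻¹ * (engel g x n) * g`. -/
def engel {G : Type*} [Group G] (g x : G) : ℕ → G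
  | 0 => x
  | n + 1 => (engel g x n)⁻¹ * g⁻¹ * engel g x n * g

/-- `E` is an Engel sink of `g`: for every `x` all sufficiently long commutators
`[x, ₙg]` lie in `E`. -/
def IsEngelSink {G : Type*} [Group G] (g : G) (E : Set G) : Prop :=
  ∀ x : G, ∃ N : ℕ, ∀ n : ℕ, N ≤ n → engel g x n ∈ E

theorem engel_add {G : Type*} [Group G] (g x : G) (n m : ℕ) :
    engel g x (n + m) = engel g (engel g x n) m := by
  induction m with
  | zero => rfl
  | succ m ih =>
    show engel g x ((n + m) + 1) = _
    simp only [engel, ih]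

/-- If an element `g` of a group `G` has a finite Engel sink, then `g` has a smallest
Engel sink `E₀` (contained in every Engel sink of `g`, hence unique), and every
`s ∈ E₀` satisfies `s = [s, ₖg]` for some `k ≥ 1`. -/
theorem smallest_engel_sink_of_finite
    {G : Type*} [Group G] (g : G) (E : Set G) (hE : IsEngelSink g E) (hfin : E.Finite) :
    ∃ E₀ : Set G, IsEngelSink g E₀ ∧ (∀ F : Set G, IsEngelSink g F → E₀ ⊆ F) ∧
      ∀ s ∈ E₀, ∃ k : ℕ, 1 ≤ k ∧ s = engel g s k := by
  classical
  refine ⟨{s | ∃ x : G, ∀ N : ℕ, ∃ n : ℕ, N ≤ n ∧ engel g x n = s}, ?_, ?_, ?_⟩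
  · -- it is a sink
    intro x
    obtain ⟨N₀, hN₀⟩ := hE x
    set Bnd : G → ℕ := fun e =>
      if h : ∃ M : ℕ, ∀ n : ℕ, M ≤ n → engel g x n ≠ e then h.choose else 0 with hBnd
    refine ⟨max N₀ (hfin.toFinset.sup Bnd), fun n hn => ?_⟩
    refine ⟨x, fun N => ?_⟩
    by_contra hcon
    push_neg at hcon
    have hinE : engel g x n ∈ hfin.toFinset := by
      rw [Set.Finite.mem_toFinset]; exact hN₀ n (le_trans (le_max_left _ _) hn)
    have hex : ∃ M : ℕ, ∀ m : ℕ, M ≤ m → engel g x m ≠ engel g x n := ⟨N, hcon⟩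
    have h1 : Bnd (engel g x n) = hex.choose := by rw [hBnd]; simp [hex]
    have h2 : Bnd (engel g x n) ≤ n :=
      le_trans (le_trans (Finset.le_sup hinE) (le_max_right N₀ _)) hn
    exact hex.choose_spec n (h1 ▸ h2) rfl
  · -- minimality
    intro F hF s hs
    obtain ⟨x, hx⟩ := hs
    obtain ⟨N, hN⟩ := hF x
    obtain ⟨n, hn, he⟩ := hx N
    exact he ▸ hN n hn
  · -- periodicity
    intro s hs
    obtain ⟨x, hx⟩ := hs
    obtain ⟨n, _, he⟩ := hx 0
    obtain ⟨m, hm, he'⟩ := hx (n + 1)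
    refine ⟨m - n, by omega, ?_⟩
    have h : engel g x m = engel g (engel g x n) (m - n) := by
      rw [← engel_add]; congr 1; omega
    rw [he] at h
    rw [← h]
    exact he'.symm
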